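/- Let L = ℚ(k,l,m,n,p,q,c) be the field of rational functions over ℚ in the indeterminates k,l,m,n,p,q,c, and work in L[x,y] with T = x + y + c. Let P = −k·x·y² − l·y + m·x²·y − (n·x·y + p + q·T·x)·(2x + y + c) and Q = −x·( l + p + m·c·x + (k+n)·x·y + m·x² + q·T·x ) (a general member of Żołądek's family CR₅). Suppose a₂₀, a₁₁, a₀₀ ∈ L are such that the 4×3 matrix M with rows (a₂₀, q, −m−q), (−a₁₁, m−n−q, k+n+q), (a₀₀, p, −l−p), (0, −a₂₀, a₁₁) has rank at most 2, i.e. every 3×3 minor of M vanishes. Then the conic F = a₂₀·x² + a₁₁·x·y + c·a₂₀·x + a₀₀ is an algebraic integral curve of P dx + Q dy: F divides P·∂F/∂y − Q·∂F/∂x in L[x,y]. -/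

import Mathlib

open MvPolynomial

/-!
`F ↦ P·F_y − Q·F_x` is a derivation `X`, and for the conic `F` a direct computation gives
`a₂₀·X(F) = x(2x + c)·(((m + q)a₂₀ − q·a₁₁)·F + Δ₀₁₃·xy − Δ₀₂₃)`, where `Δᵢⱼₖ` is the minor of
`M` on rows `i, j, k`. So once these two minors vanish, `F` divides `X(F)` with cofactor
`((m + q) − q·a₁₁/a₂₀)·x(2x + c)` whenever `a₂₀ ≠ 0`; if `a₂₀ = 0`, then `Δ₀₁₃ = q·a₁₁²` forces
`a₁₁ = 0`, so `F` is a constant and `X(F) = 0`.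
-/

/-- The field `L = ℚ(k,l,m,n,p,q,c)` of rational functions over `ℚ` in seven
indeterminates, realized as the fraction field of `ℚ[k,l,m,n,p,q,c]`. -/
abbrev L5 : Type := FractionRing (MvPolynomial (Fin 7) ℚ)

/-- The `i`-th indeterminate parameter (in the order `k,l,m,n,p,q,c`), as an element of `L`. -/
noncomputable def prm (i : Fin 7) : L5 :=
  algebraMap (MvPolynomial (Fin 7) ℚ) L5 (X i)

namespace CR5

noncomputable def k : L5 := prm 0
noncomputable def l : L5 := prm 1
noncomputable def m : L5 := prm 2
noncomputable def n : L5 := prm 3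
noncomputable def p : L5 := prm 4
noncomputable def q : L5 := prm 5
noncomputable def c : L5 := prm 6

noncomputable def x : MvPolynomial (Fin 2) L5 := X 0
noncomputable def y : MvPolynomial (Fin 2) L5 := X 1

/-- `T = x + y + c`. -/
noncomputable def T : MvPolynomial (Fin 2) L5 := x + y + C c

/-- The coefficient polynomial `P` of Żołądek's family `CR₅`. -/
noncomputable def P : MvPolynomial (Fin 2) L5 :=
  -(C k * x * y^2) - C l * y + C m * x^2 * y
    - (C n * x * y + C p + C q * T * x) * (2 * x + y + C c)

/-- The coefficient polynomial `Q` of Żołądek's family `CR₅`. -/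
noncomputable def Q : MvPolynomial (Fin 2) L5 :=
  -(x * (C l + C p + C m * C c * x + (C k + C n) * x * y + C m * x^2 + C q * T * x))

/-- The `4 × 3` matrix whose rank condition singles out the coefficients of the two
integral conics of `CR₅`. -/
noncomputable def M (a₂₀ a₁₁ a₀₀ : L5) : Matrix (Fin 4) (Fin 3) L5 :=
  !![a₂₀, q, -m - q;
     -a₁₁, m - n - q, k + n + q;
     a₀₀, p, -l - p;
     0, -a₂₀, a₁₁]

set_option synthInstance.maxHeartbeats 200000 in
noncomputable def vectorField :
    Derivation L5 (MvPolynomial (Fin 2) L5) (MvPolynomial (Fin 2) L5) :=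
  P • pderiv (R := L5) (1 : Fin 2) - Q • pderiv (R := L5) (0 : Fin 2)

theorem vectorField_apply (F : MvPolynomial (Fin 2) L5) :
    vectorField F = P * pderiv 1 F - Q * pderiv 0 F := by
  simp [vectorField]

noncomputable def conic (a₂₀ a₁₁ a₀₀ : L5) : MvPolynomial (Fin 2) L5 :=
  C a₂₀ * x^2 + C a₁₁ * x * y + C c * C a₂₀ * x + C a₀₀

theorem prm_ne_zero (i : Fin 7) : prm i ≠ 0 :=
  (map_ne_zero_iff _ (IsFractionRing.injective (MvPolynomial (Fin 7) ℚ) L5)).mpr (X_ne_zero i)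

theorem det_submatrix_013 (a₂₀ a₁₁ a₀₀ : L5) :
    ((M a₂₀ a₁₁ a₀₀).submatrix ![0, 1, 3] id).det
      = q * a₁₁^2 - (2 * q + n) * a₂₀ * a₁₁ + (k + n + q) * a₂₀^2 := by
  rw [Matrix.det_fin_three]
  simp [M]
  ring

theorem det_submatrix_023 (a₂₀ a₁₁ a₀₀ : L5) :
    ((M a₂₀ a₁₁ a₀₀).submatrix ![0, 2, 3] id).det
      = ((m + q) * a₂₀ - q * a₁₁) * a₀₀ + p * a₂₀ * a₁₁ - (l + p) * a₂₀^2 := by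
  rw [Matrix.det_fin_three]
  simp [M]
  ring

theorem pderiv_one_conic (a₂₀ a₁₁ a₀₀ : L5) :
    pderiv 1 (conic a₂₀ a₁₁ a₀₀) = C a₁₁ * x := by
  simp [conic, x, y]

theorem pderiv_zero_conic (a₂₀ a₁₁ a₀₀ : L5) :
    pderiv 0 (conic a₂₀ a₁₁ a₀₀) = C a₂₀ * (2 * x + C c) + C a₁₁ * y := by
  simp [conic, x, y]
  ring

theorem C_mul_vectorField_conic (a₂₀ a₁₁ a₀₀ : L5) :
    C a₂₀ * vectorField (conic a₂₀ a₁₁ a₀₀)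
      = x * (2 * x + C c) * (C ((m + q) * a₂₀ - q * a₁₁) * conic a₂₀ a₁₁ a₀₀
          + C ((M a₂₀ a₁₁ a₀₀).submatrix ![0, 1, 3] id).det * x * y
          - C ((M a₂₀ a₁₁ a₀₀).submatrix ![0, 2, 3] id).det) := by
  rw [det_submatrix_013, det_submatrix_023, vectorField_apply, pderiv_one_conic,
    pderiv_zero_conic]
  simp only [conic, P, Q, T, map_add, map_sub, map_mul, map_pow, map_ofNat]
  ring

theorem conic_dvd_vectorField_conic_of_ne_zero {a₂₀ a₁₁ a₀₀ : L5} (ha : a₂₀ ≠ 0)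
    (h₀₁₃ : ((M a₂₀ a₁₁ a₀₀).submatrix ![0, 1, 3] id).det = 0)
    (h₀₂₃ : ((M a₂₀ a₁₁ a₀₀).submatrix ![0, 2, 3] id).det = 0) :
    conic a₂₀ a₁₁ a₀₀ ∣ vectorField (conic a₂₀ a₁₁ a₀₀) := by
  have hu : IsUnit (C a₂₀ : MvPolynomial (Fin 2) L5) := ha.isUnit.map C
  rw [← hu.dvd_mul_left, C_mul_vectorField_conic, h₀₁₃, h₀₂₃]
  exact ⟨x * (2 * x + C c) * C ((m + q) * a₂₀ - q * a₁₁), by simp only [map_zero]; ring⟩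

theorem conic_dvd_vectorField_conic_of_eq_zero {a₁₁ a₀₀ : L5}
    (h₀₁₃ : ((M 0 a₁₁ a₀₀).submatrix ![0, 1, 3] id).det = 0) :
    conic 0 a₁₁ a₀₀ ∣ vectorField (conic 0 a₁₁ a₀₀) := by
  have ha₁₁ : a₁₁ = 0 := by
    rw [det_submatrix_013] at h₀₁₃
    simpa [q, prm_ne_zero] using h₀₁₃
  have hconst : conic 0 a₁₁ a₀₀ = algebraMap L5 _ a₀₀ := by
    simp [conic, ha₁₁]
  rw [hconst, vectorField.map_algebraMap]
  exact dvd_zero _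

/-- **If `(a₂₀, a₁₁, a₀₀)` makes the matrix `M` of rank at most 2 (all `3 × 3` minors
vanish), then the conic `F = a₂₀·x² + a₁₁·x·y + c·a₂₀·x + a₀₀` is an algebraic integral
curve of the general member of Żołądek's family `CR₅`**: `F` divides `P·F_y − Q·F_x`. -/
theorem conic_is_integral_curve
    (a₂₀ a₁₁ a₀₀ : L5)
    (hminors : ∀ i₀ i₁ i₂ : Fin 4,
      ((M a₂₀ a₁₁ a₀₀).submatrix ![i₀, i₁, i₂] id).det = 0) :
    (C a₂₀ * x^2 + C a₁₁ * x * y + C c * C a₂₀ * x + C a₀₀)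
      ∣ P * pderiv 1 (C a₂₀ * x^2 + C a₁₁ * x * y + C c * C a₂₀ * x + C a₀₀)
        - Q * pderiv 0 (C a₂₀ * x^2 + C a₁₁ * x * y + C c * C a₂₀ * x + C a₀₀) := by
  rw [← vectorField_apply]
  rcases eq_or_ne a₂₀ 0 with rfl | ha
  · exact conic_dvd_vectorField_conic_of_eq_zero (hminors 0 1 3)
  · exact conic_dvd_vectorField_conic_of_ne_zero ha (hminors 0 1 3) (hminors 0 2 3)

end CR5
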